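/- arXiv:1210.3140 — 4 statements merged into one kernel-verified Lean document; each statement's English description precedes it below -/
import Mathlib

section
/- Under the kinematic equations for rolling the Lorentzian sphere, rolling realizes normal parallel transport: the normal vector field Ψ(t) := R(t) x0 along the rolling curve x(t) := R(t) x0 satisfies ⟨Ψ′(t), x(t)⟩_J = 0 for all t, i.e. its normal covariant derivative ⟨Ψ′(t), x(t)⟩_J · x(t) vanishes identically. -/
open Matrix

noncomputable section

/-- `J = diag(-1, I_m)` on `ℝ^{m+1}`. -/
def lorJ (m : ℕ) : Matrix (Fin (m+1)) (Fin (m+1)) ℝ :=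
  Matrix.diagonal (fun i => if i = 0 then (-1 : ℝ) else 1)

/-- The scalar product `⟨x,y⟩_J = xᵗ J y`. -/
def lorIp {m : ℕ} (x y : Fin (m+1) → ℝ) : ℝ :=
  x ⬝ᵥ (lorJ m) *ᵥ y

/-!
Along the rolling, `Ψ′ = R A x0` with `A = (u x0ᵗ − x0 uᵗ) J`. Since `⟨x0,x0⟩_J = 1` and
`⟨u,x0⟩_J = 0`, the generator `A` sends `x0` to `u`, so `Ψ′ = R u`. As `R` preserves
`⟨·,·⟩_J`, we get `⟨Ψ′, x⟩_J = ⟨R u, R x0⟩_J = ⟨u, x0⟩_J = 0`.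
-/

theorem hasDerivAt_mulVec_const {n : Type*} [Fintype n] {M : ℝ → Matrix n n ℝ}
    {M' : Matrix n n ℝ} {t : ℝ} (hM : ∀ i j, HasDerivAt (fun s => M s i j) (M' i j) t)
    (v : n → ℝ) :
    HasDerivAt (fun s => M s *ᵥ v) (M' *ᵥ v) t := by
  rw [hasDerivAt_pi]
  intro i
  simpa only [mulVec, dotProduct] using
    HasDerivAt.fun_sum fun j (_ : j ∈ Finset.univ) => (hM i j).mul_const (v j)

theorem lorIp_mulVec_mulVec {m : ℕ} {R : Matrix (Fin (m+1)) (Fin (m+1)) ℝ}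
    (hR : Rᵀ * lorJ m * R = lorJ m) (a b : Fin (m+1) → ℝ) :
    lorIp (R *ᵥ a) (R *ᵥ b) = lorIp a b := by
  unfold lorIp
  rw [mulVec_mulVec, dotProduct_mulVec, vecMul_mulVec, ← Matrix.mul_assoc, hR,
    ← dotProduct_mulVec]

theorem vecMulVec_sub_vecMulVec_mul_lorJ_mulVec {m : ℕ} {x0 u : Fin (m+1) → ℝ} (hx0 : lorIp x0 x0 = 1)
    (hu : lorIp u x0 = 0) :
    ((vecMulVec u x0 - vecMulVec x0 u) * lorJ m) *ᵥ x0 = u := by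
  unfold lorIp at hx0 hu
  rw [← mulVec_mulVec, sub_mulVec, vecMulVec_mulVec, vecMulVec_mulVec, op_smul_eq_smul,
    op_smul_eq_smul, hx0, hu, one_smul, zero_smul, sub_zero]

theorem rolling_realizes_normal_parallel_transport_general (m : ℕ)
    (x0 : Fin (m+1) → ℝ) (hx0 : lorIp x0 x0 = 1)
    (u : ℝ → Fin (m+1) → ℝ)
    (hu : ∀ t, lorIp (u t) x0 = 0)
    (R : ℝ → Matrix (Fin (m+1)) (Fin (m+1)) ℝ)
    (hR : ∀ t i j, HasDerivAt (fun s => R s i j)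
      ((R t * ((vecMulVec (u t) x0 - vecMulVec x0 (u t)) * lorJ m)) i j) t)
    (hRJ : ∀ t, (R t)ᵀ * lorJ m * R t = lorJ m) :
    ∀ t,
      lorIp (deriv (fun s => R s *ᵥ x0) t) (R t *ᵥ x0) = 0 ∧
      lorIp (deriv (fun s => R s *ᵥ x0) t) (R t *ᵥ x0) • (R t *ᵥ x0) = 0 := by
  intro t
  have hΨ' : deriv (fun s => R s *ᵥ x0) t = R t *ᵥ u t := by
    rw [(hasDerivAt_mulVec_const (hR t) x0).deriv, ← mulVec_mulVec,
      vecMulVec_sub_vecMulVec_mul_lorJ_mulVec hx0 (hu t)]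
  have hnormal : lorIp (deriv (fun s => R s *ᵥ x0) t) (R t *ᵥ x0) = 0 := by
    rw [hΨ', lorIp_mulVec_mulVec (hRJ t), hu t]
  exact ⟨hnormal, by rw [hnormal, zero_smul]⟩

/-- Rolling the Lorentzian sphere realizes normal parallel transport: the normal
vector field `Ψ(t) := R(t) x0` along the rolling curve `x(t) := R(t) x0` satisfies
`⟨Ψ′(t), x(t)⟩_J = 0`, i.e. its normal covariant derivative
`⟨Ψ′(t), x(t)⟩_J • x(t)` vanishes identically. -/
theorem rolling_realizes_normal_parallel_transport (m : ℕ)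
    (x0 : Fin (m+1) → ℝ) (hx0 : lorIp x0 x0 = 1)
    (u : ℝ → Fin (m+1) → ℝ) (hucont : Continuous u)
    (hu : ∀ t, lorIp (u t) x0 = 0)
    (R : ℝ → Matrix (Fin (m+1)) (Fin (m+1)) ℝ)
    (hR : ∀ t i j, HasDerivAt (fun s => R s i j)
      ((R t * ((vecMulVec (u t) x0 - vecMulVec x0 (u t)) * lorJ m)) i j) t)
    (hRJ : ∀ t, (R t)ᵀ * lorJ m * R t = lorJ m) :
    ∀ t,
      lorIp (deriv (fun s => R s *ᵥ x0) t) (R t *ᵥ x0) = 0 ∧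
      lorIp (deriv (fun s => R s *ᵥ x0) t) (R t *ᵥ x0) • (R t *ᵥ x0) = 0 :=
  rolling_realizes_normal_parallel_transport_general m x0 hx0 u hu R hR hRJ
end
end

section
/- Under the kinematic equations for rolling the Lorentzian sphere, the curve R(t) in the pseudo-orthogonal group satisfies ⟨⟨R′(t), R′(t)⟩⟩_J = 2 ⟨u(t), u(t)⟩_J for all t, where ⟨⟨A,B⟩⟩_J := tr(J Aᵗ J B). Hence R(t) has the same causal character as the control u(t) (and as the rolling curve R(t)x0). -/
open Matrix

noncomputable section

namespace Matrix

variable {n α : Type*} [Fintype n]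

/-- The trace form `⟨⟨A, B⟩⟩_J = tr (A^J B)`, where `A^J = J Aᵀ J` is the `J`-adjoint. -/
def jTraceForm [CommRing α] (J A B : Matrix n n α) : α :=
  trace (J * Aᵀ * J * B)

theorem trace_vecMulVec_mul_vecMulVec [CommSemiring α] (a b c d : n → α) :
    trace (vecMulVec a b * vecMulVec c d) = (b ⬝ᵥ c) * (a ⬝ᵥ d) := by
  rw [vecMulVec_mul_vecMulVec, trace_vecMulVec, dotProduct_smul, smul_eq_mul]

variable [CommRing α]

theorem trace_mul_self_wedge_mul (J : Matrix n n α) (u x : n → α) :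
    trace ((vecMulVec u x - vecMulVec x u) * J * ((vecMulVec u x - vecMulVec x u) * J))
      = (x ⬝ᵥ J *ᵥ u) ^ 2 + (u ⬝ᵥ J *ᵥ x) ^ 2
        - 2 * ((u ⬝ᵥ J *ᵥ u) * (x ⬝ᵥ J *ᵥ x)) := by
  rw [sub_mul, vecMulVec_mul, vecMulVec_mul]
  simp only [sub_mul, mul_sub, trace_sub, trace_vecMulVec_mul_vecMulVec]
  simp only [dotProduct_comm _ (_ ᵥ* J), ← dotProduct_mulVec]
  ring

theorem jTraceForm_mul_left {J R : Matrix n n α} (hR : Rᵀ * J * R = J) (A B : Matrix n n α) :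
    jTraceForm J (R * A) (R * B) = jTraceForm J A B := by
  unfold jTraceForm
  rw [transpose_mul]
  congr 1
  calc J * (Aᵀ * Rᵀ) * J * (R * B) = J * Aᵀ * (Rᵀ * J * R) * B := by noncomm_ring
    _ = J * Aᵀ * J * B := by rw [hR]

variable [DecidableEq n]

theorem jTraceForm_self_of_transpose_eq_neg {J B : Matrix n n α} (hJ : Jᵀ = J) (hJJ : J * J = 1)
    (hB : Bᵀ = -B) : jTraceForm J (B * J) (B * J) = -trace (B * J * (B * J)) := by
  unfold jTraceForm
  rw [transpose_mul, hJ, hB, ← trace_neg]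
  congr 1
  calc J * (J * -B) * J * (B * J) = -((J * J) * B * J * (B * J)) := by noncomm_ring
    _ = -(B * J * (B * J)) := by rw [hJJ, Matrix.one_mul]

theorem jTraceForm_wedge_self {J : Matrix n n α} (hJ : Jᵀ = J) (hJJ : J * J = 1) (u x : n → α) :
    jTraceForm J ((vecMulVec u x - vecMulVec x u) * J) ((vecMulVec u x - vecMulVec x u) * J)
      = 2 * ((u ⬝ᵥ J *ᵥ u) * (x ⬝ᵥ J *ᵥ x) - (u ⬝ᵥ J *ᵥ x) ^ 2) := by
  have hskew : (vecMulVec u x - vecMulVec x u)ᵀ = -(vecMulVec u x - vecMulVec x u) := by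
    rw [transpose_sub, transpose_vecMulVec, transpose_vecMulVec, neg_sub]
  have hsymm : x ⬝ᵥ J *ᵥ u = u ⬝ᵥ J *ᵥ x := by
    rw [dotProduct_mulVec, ← mulVec_transpose, hJ, dotProduct_comm]
  rw [jTraceForm_self_of_transpose_eq_neg hJ hJJ hskew, trace_mul_self_wedge_mul, hsymm]
  ring

end Matrix

theorem lorJ_transpose (m : ℕ) : (lorJ m)ᵀ = lorJ m :=
  diagonal_transpose _

theorem lorJ_mul_self (m : ℕ) : lorJ m * lorJ m = 1 := by
  rw [lorJ, diagonal_mul_diagonal, ← diagonal_one]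
  congr 1
  ext i
  split_ifs <;> norm_num

theorem rolling_group_curve_causal_character_general (m : ℕ)
    (x0 : Fin (m+1) → ℝ) (hx0 : lorIp x0 x0 = 1)
    (u : ℝ → Fin (m+1) → ℝ)
    (hu : ∀ t, lorIp (u t) x0 = 0)
    (R R' : ℝ → Matrix (Fin (m+1)) (Fin (m+1)) ℝ)
    (hkin : ∀ t, R' t = R t * ((vecMulVec (u t) x0 - vecMulVec x0 (u t)) * lorJ m))
    (hRJ : ∀ t, (R t)ᵀ * lorJ m * R t = lorJ m) :
    ∀ t,
      Matrix.trace (lorJ m * (R' t)ᵀ * lorJ m * R' t) = 2 * lorIp (u t) (u t) := by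
  intro t
  calc Matrix.trace (lorJ m * (R' t)ᵀ * lorJ m * R' t)
      = jTraceForm (lorJ m) ((vecMulVec (u t) x0 - vecMulVec x0 (u t)) * lorJ m)
          ((vecMulVec (u t) x0 - vecMulVec x0 (u t)) * lorJ m) := by
        rw [← jTraceForm_mul_left (hRJ t), ← hkin t]
        rfl
    _ = 2 * (lorIp (u t) (u t) * lorIp x0 x0 - lorIp (u t) x0 ^ 2) :=
        jTraceForm_wedge_self (lorJ_transpose m) (lorJ_mul_self m) (u t) x0
    _ = 2 * lorIp (u t) (u t) := by rw [hx0, hu t]; ring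

/-- Under the kinematic equations for rolling the Lorentzian sphere, the curve
`R(t)` in the pseudo-orthogonal group satisfies
`⟨⟨R′(t), R′(t)⟩⟩_J = 2 ⟨u(t), u(t)⟩_J`, where `⟨⟨A,B⟩⟩_J = tr(J Aᵗ J B)`. -/
theorem rolling_group_curve_causal_character (m : ℕ)
    (x0 : Fin (m+1) → ℝ) (hx0 : lorIp x0 x0 = 1)
    (u : ℝ → Fin (m+1) → ℝ) (hucont : Continuous u)
    (hu : ∀ t, lorIp (u t) x0 = 0)
    (R R' : ℝ → Matrix (Fin (m+1)) (Fin (m+1)) ℝ)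
    (hR : ∀ t i j, HasDerivAt (fun s => R s i j) (R' t i j) t)
    (hkin : ∀ t, R' t = R t * ((vecMulVec (u t) x0 - vecMulVec x0 (u t)) * lorJ m))
    (hRJ : ∀ t, (R t)ᵀ * lorJ m * R t = lorJ m) :
    ∀ t,
      Matrix.trace (lorJ m * (R' t)ᵀ * lorJ m * R' t) = 2 * lorIp (u t) (u t) :=
  rolling_group_curve_causal_character_general m x0 hx0 u hu R R' hkin hRJ
end
end

section
/- Geodesic reachability by rolling on the Lorentzian sphere: let m ≥ 2 and let x0, x1 ∈ ℝ^{m+1} satisfy ⟨x0,x0⟩_J = ⟨x1,x1⟩_J = 1. If either ⟨x0,x1⟩_J > −1 or x1 = −x0, then there exist a vector u ∈ ℝ^{m+1} with ⟨u,x0⟩_J = 0 and a time t1 > 0 such that exp(t1 (u x0ᵗ − x0 uᵗ) J) x0 = x1; that is, x1 is geodesically reachable by rolling from x0. -/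
open Matrix Real

noncomputable section

/-! With `A = (u xᵗ − x uᵗ) J`, the conditions `⟨x,x⟩_J = 1` and `⟨u,x⟩_J = 0` give `A x = u` and
`A u = −⟨u,u⟩_J x`, so the plane spanned by `x` and `u` is `A`-invariant and `exp (t A) x` is
`C(t) x + S(t) u`, with `C`, `S` the cosine and sine series for `κ = ⟨u,u⟩_J`.
If `a = ⟨x₀,x₁⟩_J > −1`, take `u = x₁ − a x₀`; then `κ = 1 − a²`, and a time with `C = a`, `S = 1`
is `arccos a / √κ`, `1` or `arcosh a / √(−κ)` according to the sign of `κ`.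
If `x₁ = −x₀`, take `u` a spacelike unit vector orthogonal to `x₀` (it exists because `m ≥ 2`) and
`t = π`. -/

open scoped Nat

/- The Taylor coefficients of `cos (√κ t)` and of `sin (√κ t) / √κ`; they make sense for every
sign of `κ`. -/
def cosSeries (κ t : ℝ) (k : ℕ) : ℝ := (-κ) ^ k * t ^ (2 * k) / (2 * k)!

def sinSeries (κ t : ℝ) (k : ℕ) : ℝ := (-κ) ^ k * t ^ (2 * k + 1) / (2 * k + 1)!

lemma hasSum_cosSeries_sq (ω t : ℝ) : HasSum (cosSeries (ω ^ 2) t) (cos (ω * t)) := by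
  refine (Real.hasSum_cos (ω * t)).congr_fun fun k => ?_
  rw [cosSeries, neg_pow, mul_pow, pow_mul, pow_mul]
  ring

lemma hasSum_sinSeries_sq (t : ℝ) {ω : ℝ} (hω : ω ≠ 0) :
    HasSum (sinSeries (ω ^ 2) t) (sin (ω * t) / ω) := by
  refine ((Real.hasSum_sin (ω * t)).div_const ω).congr_fun fun k => ?_
  rw [sinSeries, neg_pow, mul_pow, pow_succ ω (2 * k), pow_mul]
  field_simp

lemma hasSum_cosSeries_neg_sq (ω t : ℝ) : HasSum (cosSeries (-ω ^ 2) t) (cosh (ω * t)) := by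
  refine (Real.hasSum_cosh (ω * t)).congr_fun fun k => ?_
  rw [cosSeries, neg_neg, mul_pow, pow_mul, pow_mul]

lemma hasSum_sinSeries_neg_sq (t : ℝ) {ω : ℝ} (hω : ω ≠ 0) :
    HasSum (sinSeries (-ω ^ 2) t) (sinh (ω * t) / ω) := by
  refine ((Real.hasSum_sinh (ω * t)).div_const ω).congr_fun fun k => ?_
  rw [sinSeries, neg_neg, mul_pow, pow_succ ω (2 * k), pow_mul]
  field_simp

lemma hasSum_cosSeries_zero (t : ℝ) : HasSum (cosSeries 0 t) 1 := by
  convert hasSum_single (f := cosSeries 0 t) 0 fun k hk => by simp [cosSeries, hk]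
  simp [cosSeries]

lemma hasSum_sinSeries_zero (t : ℝ) : HasSum (sinSeries 0 t) t := by
  convert hasSum_single (f := sinSeries 0 t) 0 fun k hk => by simp [sinSeries, hk]
  simp [sinSeries]

lemma exists_hasSum_cosSeries_sinSeries {a : ℝ} (ha : -1 < a) :
    ∃ t > 0, HasSum (cosSeries (1 - a ^ 2) t) a ∧ HasSum (sinSeries (1 - a ^ 2) t) 1 := by
  rcases lt_trichotomy a 1 with ha1 | rfl | ha1
  · set ω := √(1 - a ^ 2)
    have hω : 0 < ω := sqrt_pos.mpr (by nlinarith)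
    have hωsq : ω ^ 2 = 1 - a ^ 2 := sq_sqrt (by nlinarith)
    have hωt : ω * (arccos a / ω) = arccos a := mul_div_cancel₀ _ hω.ne'
    refine ⟨arccos a / ω, div_pos (arccos_pos.mpr ha1) hω, ?_, ?_⟩
    · simpa [← hωsq, hωt, cos_arccos ha.le ha1.le] using hasSum_cosSeries_sq ω (arccos a / ω)
    · have hsin : sin (arccos a) = ω := sin_arccos a
      simpa [← hωsq, hωt, hsin, hω.ne'] using hasSum_sinSeries_sq (arccos a / ω) hω.ne'
  · exact ⟨1, one_pos, by simpa using hasSum_cosSeries_zero 1,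
      by simpa using hasSum_sinSeries_zero 1⟩
  · set ω := √(a ^ 2 - 1)
    have hω : 0 < ω := sqrt_pos.mpr (by nlinarith)
    have hκ : 1 - a ^ 2 = -ω ^ 2 := by rw [sq_sqrt (by nlinarith)]; ring
    have hωt : ω * (arcosh a / ω) = arcosh a := mul_div_cancel₀ _ hω.ne'
    refine ⟨arcosh a / ω, div_pos (arcosh_pos ha1) hω, ?_, ?_⟩
    · simpa [hκ, hωt, cosh_arcosh ha1.le] using hasSum_cosSeries_neg_sq ω (arcosh a / ω)
    · have hsinh : sinh (arcosh a) = ω := sinh_arcosh ha1.le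
      simpa [hκ, hωt, hsinh, hω.ne'] using hasSum_sinSeries_neg_sq (arcosh a / ω) hω.ne'

section InvariantPlane

variable {n : Type*} [Fintype n] [DecidableEq n] {A : Matrix n n ℝ} {v w : n → ℝ} {κ : ℝ}

lemma pow_mulVec_of_mulVec_eq (hv : A *ᵥ v = w) (hw : A *ᵥ w = -κ • v) (k : ℕ) :
    A ^ (2 * k) *ᵥ v = (-κ) ^ k • v ∧ A ^ (2 * k + 1) *ᵥ v = (-κ) ^ k • w := by
  have hodd : ∀ k, A ^ (2 * k) *ᵥ v = (-κ) ^ k • v → A ^ (2 * k + 1) *ᵥ v = (-κ) ^ k • w :=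
    fun k h => by rw [pow_succ', ← mulVec_mulVec, h, mulVec_smul, hv]
  induction k with
  | zero =>
    have heven : A ^ (2 * 0) *ᵥ v = (-κ) ^ 0 • v := by simp
    exact ⟨heven, hodd 0 heven⟩
  | succ k ih =>
    have heven : A ^ (2 * (k + 1)) *ᵥ v = (-κ) ^ (k + 1) • v := by
      rw [show 2 * (k + 1) = 2 * k + 1 + 1 by ring, pow_succ', ← mulVec_mulVec, ih.2,
        mulVec_smul, hw, smul_smul, pow_succ]
    exact ⟨heven, hodd _ heven⟩

lemma exp_smul_mulVec_of_mulVec_eq (hv : A *ᵥ v = w) (hw : A *ᵥ w = -κ • v) {t c s : ℝ}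
    (hc : HasSum (cosSeries κ t) c) (hs : HasSum (sinSeries κ t) s) :
    NormedSpace.exp (t • A) *ᵥ v = c • v + s • w := by
  have hexp : HasSum (fun n => ((n ! : ℝ)⁻¹ * t ^ n) • (A ^ n *ᵥ v))
      (NormedSpace.exp (t • A) *ᵥ v) := by
    have hseries : HasSum (fun n => ((n ! : ℝ)⁻¹ • (t • A) ^ n) *ᵥ v)
        (NormedSpace.exp (t • A) *ᵥ v) := by
      -- the operator norm induces the usual topology on matrices, so it may be used to sum `exp`
      open scoped Matrix.Norms.Operator in
      exact (NormedSpace.exp_series_hasSum_exp' (t • A)).map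
        (mulVec.addMonoidHomLeft v) (continuous_id.matrix_mulVec continuous_const)
    simpa only [smul_pow, smul_mulVec, smul_smul] using hseries
  refine hexp.unique (HasSum.even_add_odd ?_ ?_)
  · refine (hc.smul_const v).congr_fun fun k => ?_
    rw [(pow_mulVec_of_mulVec_eq hv hw k).1, smul_smul, cosSeries]
    ring_nf
  · refine (hs.smul_const w).congr_fun fun k => ?_
    rw [(pow_mulVec_of_mulVec_eq hv hw k).2, smul_smul, sinSeries]
    ring_nf

end InvariantPlane

section Lorentz

variable {m : ℕ}

lemma lorIp_comm (x y : Fin (m + 1) → ℝ) : lorIp x y = lorIp y x := by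
  simp only [lorIp, lorJ, mulVec_diagonal, dotProduct]
  exact Finset.sum_congr rfl fun i _ => by ring

@[simp]
lemma lorIp_sub_left (x y z : Fin (m + 1) → ℝ) : lorIp (x - y) z = lorIp x z - lorIp y z :=
  sub_dotProduct x y _

@[simp]
lemma lorIp_smul_left (c : ℝ) (x y : Fin (m + 1) → ℝ) : lorIp (c • x) y = c * lorIp x y :=
  smul_dotProduct c x _

@[simp]
lemma lorIp_sub_right (x y z : Fin (m + 1) → ℝ) : lorIp x (y - z) = lorIp x y - lorIp x z := by
  rw [lorIp_comm, lorIp_sub_left, lorIp_comm y, lorIp_comm z]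

@[simp]
lemma lorIp_smul_right (c : ℝ) (x y : Fin (m + 1) → ℝ) : lorIp x (c • y) = c * lorIp x y := by
  rw [lorIp_comm, lorIp_smul_left, lorIp_comm y]

lemma lorIp_single_left {i : Fin (m + 1)} (hi : i ≠ 0) (c : ℝ) (y : Fin (m + 1) → ℝ) :
    lorIp (Pi.single i c) y = c * y i := by
  simp [lorIp, lorJ, mulVec_diagonal, hi]

lemma exists_lorIp_eq_zero_lorIp_self_eq_one_of_ne {i j : Fin (m + 1)} (hi : i ≠ 0) (hj : j ≠ 0)
    (hij : i ≠ j) (x : Fin (m + 1) → ℝ) : ∃ u, lorIp u x = 0 ∧ lorIp u u = 1 := by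
  by_cases hxi : x i = 0
  · exact ⟨Pi.single i 1, by simp [lorIp_single_left hi, hxi], by simp [lorIp_single_left hi]⟩
  set v : Fin (m + 1) → ℝ := Pi.single i (x j) - Pi.single j (x i)
  have hvx : lorIp v x = 0 := by simp [v, lorIp_single_left hi, lorIp_single_left hj, mul_comm]
  have hvv : lorIp v v = x i ^ 2 + x j ^ 2 := by
    simp only [v, lorIp_sub_left, lorIp_sub_right, lorIp_single_left hi, lorIp_single_left hj,
      Pi.single_eq_same, Pi.single_eq_of_ne hij, Pi.single_eq_of_ne hij.symm]
    ring
  have hr : 0 < x i ^ 2 + x j ^ 2 := by positivity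
  refine ⟨(√(x i ^ 2 + x j ^ 2))⁻¹ • v, by simp [hvx], ?_⟩
  simp only [lorIp_smul_left, lorIp_smul_right, hvv]
  field_simp
  rw [sq_sqrt hr.le]

lemma exists_lorIp_eq_zero_lorIp_self_eq_one (hm : 2 ≤ m) (x : Fin (m + 1) → ℝ) :
    ∃ u, lorIp u x = 0 ∧ lorIp u u = 1 :=
  exists_lorIp_eq_zero_lorIp_self_eq_one_of_ne (i := ⟨1, by omega⟩) (j := ⟨2, by omega⟩)
    (by simp [Fin.ext_iff]) (by simp [Fin.ext_iff]) (by simp [Fin.ext_iff]) x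

end Lorentz

section Rolling

variable {m : ℕ}

def rollingMatrix (u x : Fin (m + 1) → ℝ) : Matrix (Fin (m + 1)) (Fin (m + 1)) ℝ :=
  (vecMulVec u x - vecMulVec x u) * lorJ m

lemma rollingMatrix_mulVec (u x z : Fin (m + 1) → ℝ) :
    rollingMatrix u x *ᵥ z = lorIp x z • u - lorIp u z • x := by
  rw [rollingMatrix, ← mulVec_mulVec, sub_mulVec, vecMulVec_mulVec, vecMulVec_mulVec,
    op_smul_eq_smul, op_smul_eq_smul]
  rfl

def GeodesicallyReachable (x₀ x₁ : Fin (m + 1) → ℝ) : Prop :=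
  ∃ (u : Fin (m + 1) → ℝ) (t₁ : ℝ), lorIp u x₀ = 0 ∧ 0 < t₁ ∧
    NormedSpace.exp (t₁ • rollingMatrix u x₀) *ᵥ x₀ = x₁

lemma exp_smul_rollingMatrix_mulVec {u x : Fin (m + 1) → ℝ} (hx : lorIp x x = 1)
    (hu : lorIp u x = 0) {t c s : ℝ} (hc : HasSum (cosSeries (lorIp u u) t) c)
    (hs : HasSum (sinSeries (lorIp u u) t) s) :
    NormedSpace.exp (t • rollingMatrix u x) *ᵥ x = c • x + s • u :=
  exp_smul_mulVec_of_mulVec_eq (by simp [rollingMatrix_mulVec, hx, hu])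
    (by simp [rollingMatrix_mulVec, lorIp_comm x u, hu]) hc hs

lemma geodesicallyReachable_of_neg_one_lt_lorIp {x₀ x₁ : Fin (m + 1) → ℝ}
    (hx₀ : lorIp x₀ x₀ = 1) (hx₁ : lorIp x₁ x₁ = 1) (h : -1 < lorIp x₀ x₁) :
    GeodesicallyReachable x₀ x₁ := by
  set a := lorIp x₀ x₁
  set u := x₁ - a • x₀
  have hu : lorIp u x₀ = 0 := by simp [u, a, hx₀, lorIp_comm x₁]
  have huu : lorIp u u = 1 - a ^ 2 := by
    simp only [u, lorIp_sub_left, lorIp_sub_right, lorIp_smul_left, lorIp_smul_right, hx₀, hx₁,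
      lorIp_comm x₁ x₀]
    ring
  obtain ⟨t, ht, hc, hs⟩ := exists_hasSum_cosSeries_sinSeries h
  rw [← huu] at hc hs
  refine ⟨u, t, hu, ht, ?_⟩
  rw [exp_smul_rollingMatrix_mulVec hx₀ hu hc hs]
  module

lemma geodesicallyReachable_neg (hm : 2 ≤ m) {x : Fin (m + 1) → ℝ} (hx : lorIp x x = 1) :
    GeodesicallyReachable x (-x) := by
  obtain ⟨u, hu, huu⟩ := exists_lorIp_eq_zero_lorIp_self_eq_one hm x
  have hc : HasSum (cosSeries (lorIp u u) π) (-1) := by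
    simpa [huu] using hasSum_cosSeries_sq 1 π
  have hs : HasSum (sinSeries (lorIp u u) π) 0 := by
    simpa [huu] using hasSum_sinSeries_sq π one_ne_zero
  refine ⟨u, π, hu, pi_pos, ?_⟩
  rw [exp_smul_rollingMatrix_mulVec hx hu hc hs]
  module

end Rolling

/-- Geodesic reachability by rolling on the Lorentzian sphere: for `m ≥ 2` and
`x0, x1 ∈ S_1^m`, if `⟨x0,x1⟩_J > −1` or `x1 = −x0`, then there are `u` with
`⟨u,x0⟩_J = 0` and `t1 > 0` such that `exp(t1 (u x0ᵗ − x0 uᵗ) J) x0 = x1`. -/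
theorem geodesic_reachability (m : ℕ) (hm : 2 ≤ m) (x0 x1 : Fin (m+1) → ℝ)
    (hx0 : lorIp x0 x0 = 1) (hx1 : lorIp x1 x1 = 1)
    (h : lorIp x0 x1 > -1 ∨ x1 = -x0) :
    ∃ (u : Fin (m+1) → ℝ) (t1 : ℝ), lorIp u x0 = 0 ∧ 0 < t1 ∧
      NormedSpace.exp (t1 • ((vecMulVec u x0 - vecMulVec x0 u) * lorJ m)) *ᵥ x0
        = x1 := by
  rcases h with h | rfl
  · exact geodesicallyReachable_of_neg_one_lt_lorIp hx0 hx1 h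
  · exact geodesicallyReachable_neg hm hx0
end
end

section
/- Let x0, x1 be distinct points of ℝ^{m+1} with ⟨x0,x0⟩_J = ⟨x1,x1⟩_J = 1. Then x1 is reachable from x0 by a timelike geodesic — i.e. there exist u with ⟨u,u⟩_J = −1, ⟨u,x0⟩_J = 0 and t > 0 such that cosh(t)·x0 + sinh(t)·u = x1 — if and only if ⟨x0,x1⟩_J > 1 (equivalently, if and only if x1 lies strictly on the side of the affine tangent hyperplane of S_1^m at x0 not containing the origin). -/
open Matrix Real

noncomputable section

namespace LinearMap.BilinForm

variable {V : Type*} [AddCommGroup V] [Module ℝ V] {B : LinearMap.BilinForm ℝ V} {x₀ x₁ u : V}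

theorem apply_cosh_smul_add_sinh_smul (h₀ : B x₀ x₀ = 1) (hu : B x₀ u = 0) (t : ℝ) :
    B x₀ (cosh t • x₀ + sinh t • u) = cosh t := by
  simp [h₀, hu]

/- The witness: `t = arcosh ⟨x₀, x₁⟩`, and `u` is the component of `x₁` orthogonal to `x₀`,
rescaled by `(sinh t)⁻¹`. -/
theorem exists_timelike_geodesic_of_one_lt (hB : B.IsSymm) (h₀ : B x₀ x₀ = 1)
    (h₁ : B x₁ x₁ = 1) (h : 1 < B x₀ x₁) :
    ∃ u, B u u = -1 ∧ B u x₀ = 0 ∧ ∃ t, 0 < t ∧ cosh t • x₀ + sinh t • u = x₁ := by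
  set c := B x₀ x₁
  set t := arcosh c
  have hcosh : cosh t = c := cosh_arcosh h.le
  have hsinh_sq : sinh t ^ 2 = c ^ 2 - 1 := by
    rw [sinh_arcosh h.le, sq_sqrt (by nlinarith)]
  have hsinh : sinh t ≠ 0 := (sinh_pos_iff.mpr (arcosh_pos h)).ne'
  have h₁₀ : B x₁ x₀ = c := hB.eq x₁ x₀
  have hw₀ : B (x₁ - c • x₀) x₀ = 0 := by
    simp only [map_sub, map_smul, LinearMap.sub_apply, LinearMap.smul_apply, smul_eq_mul, h₀, h₁₀]
    ring
  have hww : B (x₁ - c • x₀) (x₁ - c • x₀) = 1 - c ^ 2 := by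
    simp only [map_sub, map_smul, LinearMap.sub_apply, LinearMap.smul_apply, smul_eq_mul, h₀, h₁,
      h₁₀]
    ring
  refine ⟨(sinh t)⁻¹ • (x₁ - c • x₀), ?_, ?_, t, arcosh_pos h, ?_⟩
  · simp only [map_smul, LinearMap.smul_apply, smul_eq_mul, hww]
    field_simp
    linarith
  · simp only [map_smul, LinearMap.smul_apply, smul_eq_mul, hw₀, mul_zero]
  · rw [hcosh, smul_smul, mul_inv_cancel₀ hsinh, one_smul, add_sub_cancel]

theorem exists_timelike_geodesic_iff (hB : B.IsSymm) (h₀ : B x₀ x₀ = 1) (h₁ : B x₁ x₁ = 1) :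
    (∃ u, B u u = -1 ∧ B u x₀ = 0 ∧ ∃ t, 0 < t ∧ cosh t • x₀ + sinh t • u = x₁) ↔
      1 < B x₀ x₁ := by
  refine ⟨?_, exists_timelike_geodesic_of_one_lt hB h₀ h₁⟩
  rintro ⟨u, -, hu, t, ht, rfl⟩
  rw [apply_cosh_smul_add_sinh_smul h₀ ((hB.eq u x₀).symm.trans hu)]
  exact one_lt_cosh.mpr ht.ne'

end LinearMap.BilinForm

theorem lorIp_eq_toBilin' {m : ℕ} (x y : Fin (m+1) → ℝ) :
    lorIp x y = Matrix.toBilin' (lorJ m) x y :=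
  (Matrix.toBilin'_apply' _ _ _).symm

theorem isSymm_toBilin'_lorJ (m : ℕ) : (Matrix.toBilin' (lorJ m)).IsSymm := by
  refine ⟨fun x y => ?_⟩
  simp only [Matrix.toBilin'_apply', lorJ, Matrix.mulVec_diagonal, dotProduct]
  exact Finset.sum_congr rfl fun i _ => by ring

theorem timelike_geodesic_reachability_general (m : ℕ) (x0 x1 : Fin (m+1) → ℝ)
    (hx0 : lorIp x0 x0 = 1) (hx1 : lorIp x1 x1 = 1) :
    (∃ u : Fin (m+1) → ℝ, lorIp u u = -1 ∧ lorIp u x0 = 0 ∧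
        ∃ t : ℝ, 0 < t ∧ Real.cosh t • x0 + Real.sinh t • u = x1) ↔
      1 < lorIp x0 x1 := by
  simp only [lorIp_eq_toBilin'] at hx0 hx1 ⊢
  exact LinearMap.BilinForm.exists_timelike_geodesic_iff (isSymm_toBilin'_lorJ m) hx0 hx1

/-- For distinct `x0, x1 ∈ S_1^m`: `x1` is reachable from `x0` by a timelike geodesic
if and only if `⟨x0,x1⟩_J > 1`, i.e. iff `x1` lies strictly on the side of the affine
tangent hyperplane of `S_1^m` at `x0` not containing the origin. -/
theorem timelike_geodesic_reachability (m : ℕ) (x0 x1 : Fin (m+1) → ℝ)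
    (hx0 : lorIp x0 x0 = 1) (hx1 : lorIp x1 x1 = 1) (hne : x1 ≠ x0) :
    (∃ u : Fin (m+1) → ℝ, lorIp u u = -1 ∧ lorIp u x0 = 0 ∧
        ∃ t : ℝ, 0 < t ∧ Real.cosh t • x0 + Real.sinh t • u = x1) ↔
      1 < lorIp x0 x1 :=
  timelike_geodesic_reachability_general m x0 x1 hx0 hx1
end
end
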